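/- Let g and h be finite-dimensional real Lie algebras with norms and let φ : g → h be a Lie algebra homomorphism. Then for every continuous path γ : [0,1] → g one has A_{φ∘γ}(t) ∘ φ = φ ∘ A_γ(t) for all t ∈ [0,1], and consequently the induced map P(g) → P(h), γ ↦ φ∘γ, is a group homomorphism for the path-group multiplications: φ∘(γ·δ) = (φ∘γ)·(φ∘δ) for all γ, δ ∈ P(g). -/

import Mathlib

/-- `IsLieBracket B` says that the bilinear map `B = ⁅·,·⁆` makes the
(finite-dimensional, normed) real vector space `g` into a real Lie algebra:
it is alternating and satisfies the Jacobi identity (in Leibniz form). -/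
def IsLieBracket {g : Type*} [NormedAddCommGroup g] [NormedSpace ℝ g]
    (B : g →ₗ[ℝ] g →ₗ[ℝ] g) : Prop :=
  (∀ x : g, B x x = 0) ∧
  (∀ x y z : g, B x (B y z) = B (B x y) z + B y (B x z))

/-- The adjoint endomorphism `ad x = ⁅x, ·⁆` as a continuous linear map. -/
noncomputable def adL {g : Type*} [NormedAddCommGroup g] [NormedSpace ℝ g]
    [FiniteDimensional ℝ g] (B : g →ₗ[ℝ] g →ₗ[ℝ] g) (x : g) : g →L[ℝ] g :=
  LinearMap.toContinuousLinearMap (B x)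

/-- `IsTransport B γ A` says that `A : [0,1] → End(g)` is a continuously
differentiable path of linear endomorphisms of `g` with `A 0 = id` and
`A' t = ad (γ t) ∘ A t` for `t ∈ [0,1]` (one-sided derivatives at the
endpoints, and the derivative is continuous on `[0,1]`). -/
def IsTransport {g : Type*} [NormedAddCommGroup g] [NormedSpace ℝ g]
    [FiniteDimensional ℝ g] (B : g →ₗ[ℝ] g →ₗ[ℝ] g)
    (γ : ℝ → g) (A : ℝ → (g →L[ℝ] g)) : Prop :=
  A 0 = 1 ∧
  (∀ t ∈ Set.Icc (0:ℝ) 1,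
    HasDerivWithinAt A ((adL B (γ t)).comp (A t)) (Set.Icc (0:ℝ) 1) t) ∧
  ContinuousOn (fun t => (adL B (γ t)).comp (A t)) (Set.Icc (0:ℝ) 1)

/-- The path `A_γ : [0,1] → End(g)`, i.e. the unique continuously differentiable
solution of `A 0 = id`, `A' t = ad (γ t) ∘ A t` (chosen via choice; for a
continuous path `γ` it exists and is unique on `[0,1]`). -/
noncomputable def transport {g : Type*} [NormedAddCommGroup g] [NormedSpace ℝ g]
    [FiniteDimensional ℝ g] (B : g →ₗ[ℝ] g →ₗ[ℝ] g) (γ : ℝ → g) :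
    ℝ → (g →L[ℝ] g) :=
  letI := Classical.propDecidable (∃ A : ℝ → (g →L[ℝ] g), IsTransport B γ A)
  if h : ∃ A : ℝ → (g →L[ℝ] g), IsTransport B γ A then h.choose else fun _ => 1

/-!
Both `t ↦ A_{φ∘γ}(t) ∘ φ` and `t ↦ φ ∘ A_γ(t)` solve the linear equation
`X' = ad (φ (γ t)) ∘ X` in `Hom(g, h)` with `X 0 = φ`, because `φ ∘ ad x = ad (φ x) ∘ φ`;
by uniqueness of solutions of linear equations they coincide, and the path-group identity
is this equality evaluated at `δ t`. For `transport` to be the solution rather than its junk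
value, `A_γ` must exist: it is the fixed point of the Picard operator on `C([0,1], End g)`,
whose `n`-th iterate is `Mⁿ/n!`-Lipschitz.
-/

open Set Function

section LinearODE

variable {E : Type*} [NormedAddCommGroup E] [NormedSpace ℝ E]
  {L : ℝ → E →L[ℝ] E}

lemma continuous_clm_apply_IccExtend (hL : Continuous L) (α : C(Icc (0:ℝ) 1, E)) :
    Continuous fun s => L s (IccExtend zero_le_one α s) :=
  hL.clm_apply α.continuous.Icc_extend'

noncomputable def linearPicard (hL : Continuous L) (x₀ : E) (α : C(Icc (0:ℝ) 1, E)) :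
    C(Icc (0:ℝ) 1, E) where
  toFun t := ODE.picard (fun s => L s) 0 x₀ (IccExtend zero_le_one α) t
  continuous_toFun := continuous_const.add <|
    (intervalIntegral.continuous_primitive
      (fun _ _ => (continuous_clm_apply_IccExtend hL α).intervalIntegrable _ _) 0).comp
      continuous_subtype_val

lemma linearPicard_sub_linearPicard (hL : Continuous L) (x₀ : E) (α β : C(Icc (0:ℝ) 1, E))
    (t : Icc (0:ℝ) 1) :
    linearPicard hL x₀ α t - linearPicard hL x₀ β t =
      ∫ s in (0:ℝ)..t, L s (IccExtend zero_le_one α s - IccExtend zero_le_one β s) := by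
  simp only [linearPicard, ContinuousMap.coe_mk, ODE.picard_apply, map_sub,
    add_sub_add_left_eq_sub]
  rw [intervalIntegral.integral_sub ((continuous_clm_apply_IccExtend hL α).intervalIntegrable _ _)
    ((continuous_clm_apply_IccExtend hL β).intervalIntegrable _ _)]

lemma norm_linearPicard_sub_le (hL : Continuous L) (x₀ : E) {M c : ℝ}
    (hM : ∀ s ∈ Icc (0:ℝ) 1, ‖L s‖ ≤ M) {n : ℕ} {α β : C(Icc (0:ℝ) 1, E)}
    (hαβ : ∀ s : Icc (0:ℝ) 1, ‖α s - β s‖ ≤ c * (s:ℝ) ^ n) (t : Icc (0:ℝ) 1) :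
    ‖linearPicard hL x₀ α t - linearPicard hL x₀ β t‖ ≤ M * c * (t:ℝ) ^ (n + 1) / (n + 1) := by
  rw [linearPicard_sub_linearPicard]
  calc _ ≤ ∫ s in (0:ℝ)..t, M * c * s ^ n := by
        refine intervalIntegral.norm_integral_le_of_norm_le t.2.1
          (Filter.Eventually.of_forall fun s hs => ?_)
          ((by fun_prop : Continuous fun s : ℝ => M * c * s ^ n).intervalIntegrable _ _)
        have hs01 : s ∈ Icc (0:ℝ) 1 := ⟨hs.1.le, hs.2.trans t.2.2⟩
        have hαβs := hαβ ⟨s, hs01⟩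
        rw [IccExtend_of_mem _ _ hs01, IccExtend_of_mem _ _ hs01, mul_assoc]
        exact (L s).le_of_opNorm_le_of_le (hM s hs01) hαβs
    _ = M * c * (t:ℝ) ^ (n + 1) / (n + 1) := by
        rw [intervalIntegral.integral_const_mul, integral_pow]
        simp [mul_div_assoc]

lemma norm_iterate_linearPicard_sub_le (hL : Continuous L) (x₀ : E) {M : ℝ}
    (hM : ∀ s ∈ Icc (0:ℝ) 1, ‖L s‖ ≤ M) (n : ℕ) (α β : C(Icc (0:ℝ) 1, E)) (t : Icc (0:ℝ) 1) :
    ‖(linearPicard hL x₀)^[n] α t - (linearPicard hL x₀)^[n] β t‖ ≤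
      M ^ n / n.factorial * dist α β * (t:ℝ) ^ n := by
  induction n generalizing t with
  | zero => simpa [← dist_eq_norm] using ContinuousMap.dist_apply_le_dist (f := α) (g := β) t
  | succ n ih =>
    rw [iterate_succ_apply', iterate_succ_apply']
    refine (norm_linearPicard_sub_le hL x₀ hM ih t).trans_eq ?_
    rw [Nat.factorial_succ, pow_succ]
    push_cast
    field_simp
    ring

lemma exists_contractingWith_iterate_linearPicard (hL : Continuous L) (x₀ : E) :
    ∃ (n : ℕ) (K : NNReal), ContractingWith K (linearPicard hL x₀)^[n] := by
  obtain ⟨M, hM⟩ := isCompact_Icc.exists_bound_of_continuousOn hL.continuousOn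
  obtain ⟨n, hn⟩ : ∃ n : ℕ, M ^ n / n.factorial < 1 :=
    ((FloorSemiring.tendsto_pow_div_factorial_atTop M).eventually
      (eventually_lt_nhds zero_lt_one)).exists
  have hM0 : 0 ≤ M := (norm_nonneg _).trans (hM 0 (left_mem_Icc.2 zero_le_one))
  have hK : 0 ≤ M ^ n / n.factorial := by positivity
  refine ⟨n, ⟨_, hK⟩, hn, LipschitzWith.of_dist_le_mul fun α β => ?_⟩
  refine (ContinuousMap.dist_le (by positivity)).2 fun t => ?_
  rw [dist_eq_norm]
  refine (norm_iterate_linearPicard_sub_le hL x₀ hM n α β t).trans ?_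
  exact mul_le_of_le_one_right (by positivity) (pow_le_one₀ t.2.1 t.2.2)

theorem exists_hasDerivWithinAt_clm_apply [CompleteSpace E] (hL : Continuous L) (x₀ : E) :
    ∃ x : ℝ → E, x 0 = x₀ ∧
      ∀ t ∈ Icc (0:ℝ) 1, HasDerivWithinAt x (L t (x t)) (Icc (0:ℝ) 1) t := by
  obtain ⟨n, K, hK⟩ := exists_contractingWith_iterate_linearPicard hL x₀
  have : Nonempty C(Icc (0:ℝ) 1, E) := ⟨0⟩
  set α := hK.fixedPoint
  have hα : linearPicard hL x₀ α = α := hK.isFixedPt_fixedPoint_iterate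
  have hαx : ∀ t ∈ Icc (0:ℝ) 1, IccExtend zero_le_one α t =
      ODE.picard (fun s => L s) 0 x₀ (IccExtend zero_le_one α) t := fun t ht => by
    rw [IccExtend_of_mem _ _ ht]
    exact (DFunLike.congr_fun hα ⟨t, ht⟩).symm
  refine ⟨ODE.picard (fun s => L s) 0 x₀ (IccExtend zero_le_one α), ODE.picard_apply₀,
    fun t ht => ?_⟩
  rw [← hαx t ht]
  exact ODE.hasDerivWithinAt_picard_Icc (u := univ) (left_mem_Icc.2 zero_le_one)
    ((hL.comp continuous_fst).clm_apply continuous_snd).continuousOn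
    α.continuous.Icc_extend'.continuousOn (fun _ _ => trivial) x₀ ht

theorem eqOn_of_hasDerivWithinAt_clm_apply {M : ℝ → E →L[ℝ] E} {a b : ℝ}
    (hM : ContinuousOn M (Icc a b)) {x y : ℝ → E}
    (hx : ∀ t ∈ Icc a b, HasDerivWithinAt x (M t (x t)) (Icc a b) t)
    (hy : ∀ t ∈ Icc a b, HasDerivWithinAt y (M t (y t)) (Icc a b) t) (ha : x a = y a) :
    EqOn x y (Icc a b) := by
  obtain ⟨C, hC⟩ := isCompact_Icc.exists_bound_of_continuousOn hM
  have hLip : ∀ t ∈ Ico a b, LipschitzOnWith C.toNNReal (M t) univ := fun t ht =>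
    have hCt := hC t (Ico_subset_Icc_self ht)
    ((M t).lipschitz.weaken
      ((Real.le_toNNReal_iff_coe_le ((norm_nonneg _).trans hCt)).2 hCt)).lipschitzOnWith
  exact ODE_solution_unique_of_mem_Icc_right hLip (HasDerivWithinAt.continuousOn hx)
    (fun t ht => (hx t (Ico_subset_Icc_self ht)).mono_of_mem_nhdsWithin
      (Icc_mem_nhdsGE_of_mem ht)) (fun _ _ => trivial) (HasDerivWithinAt.continuousOn hy)
    (fun t ht => (hy t (Ico_subset_Icc_self ht)).mono_of_mem_nhdsWithin
      (Icc_mem_nhdsGE_of_mem ht)) (fun _ _ => trivial) ha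

end LinearODE

section Transport

variable {g : Type*} [NormedAddCommGroup g] [NormedSpace ℝ g] [FiniteDimensional ℝ g]

lemma continuous_adL (B : g →ₗ[ℝ] g →ₗ[ℝ] g) : Continuous (adL B) :=
  (LinearMap.toContinuousLinearMap.toLinearMap.comp B).continuous_of_finiteDimensional

lemma exists_isTransport (B : g →ₗ[ℝ] g →ₗ[ℝ] g) {γ : ℝ → g}
    (hγ : ContinuousOn γ (Icc 0 1)) : ∃ A, IsTransport B γ A := by
  set γ' := IccExtend zero_le_one ((Icc (0:ℝ) 1).domRestrict γ)
  have hγγ' : EqOn γ γ' (Icc 0 1) := fun t ht => by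
    simp only [γ', IccExtend_of_mem _ _ ht, domRestrict_apply]
  obtain ⟨A, hA0, hA⟩ := exists_hasDerivWithinAt_clm_apply
    (L := fun t => ContinuousLinearMap.compL ℝ g g g (adL B (γ' t)))
    ((ContinuousLinearMap.compL ℝ g g g).continuous.comp
      ((continuous_adL B).comp hγ.domRestrict.Icc_extend')) 1
  have hA' : ∀ t ∈ Icc (0:ℝ) 1,
      HasDerivWithinAt A ((adL B (γ t)).comp (A t)) (Icc (0:ℝ) 1) t := fun t ht => by
    simpa [← hγγ' ht] using hA t ht
  exact ⟨A, hA0, hA', ((continuous_adL B).comp_continuousOn hγ).clm_comp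
    (HasDerivWithinAt.continuousOn hA')⟩

lemma isTransport_transport {B : g →ₗ[ℝ] g →ₗ[ℝ] g} {γ : ℝ → g}
    (hγ : ContinuousOn γ (Icc 0 1)) : IsTransport B γ (transport B γ) := by
  have hex := exists_isTransport B hγ
  rw [transport, dif_pos hex]
  exact hex.choose_spec

end Transport

section Naturality

variable {g h : Type*} [NormedAddCommGroup g] [NormedSpace ℝ g] [FiniteDimensional ℝ g]
  [NormedAddCommGroup h] [NormedSpace ℝ h] [FiniteDimensional ℝ h]
  {B : g →ₗ[ℝ] g →ₗ[ℝ] g} {B' : h →ₗ[ℝ] h →ₗ[ℝ] h} {φ : g →ₗ[ℝ] h}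

lemma toContinuousLinearMap_comp_adL (hφ : ∀ x y : g, φ (B x y) = B' (φ x) (φ y)) (x : g) :
    (LinearMap.toContinuousLinearMap φ).comp (adL B x) =
      (adL B' (φ x)).comp (LinearMap.toContinuousLinearMap φ) := by
  ext y
  simp [adL, hφ]

lemma IsTransport.comp_eqOn_comp (hφ : ∀ x y : g, φ (B x y) = B' (φ x) (φ y)) {γ : ℝ → g}
    (hγ : ContinuousOn γ (Icc 0 1)) {A : ℝ → g →L[ℝ] g} {A' : ℝ → h →L[ℝ] h}
    (hA : IsTransport B γ A) (hA' : IsTransport B' (fun s => φ (γ s)) A') :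
    EqOn (fun t => (A' t).comp (LinearMap.toContinuousLinearMap φ))
      (fun t => (LinearMap.toContinuousLinearMap φ).comp (A t)) (Icc 0 1) := by
  refine eqOn_of_hasDerivWithinAt_clm_apply
    (M := fun s => ContinuousLinearMap.compL ℝ g h h (adL B' (φ (γ s))))
    ((ContinuousLinearMap.compL ℝ g h h).continuous.comp_continuousOn <|
      (continuous_adL B').comp_continuousOn <|
        φ.continuous_of_finiteDimensional.comp_continuousOn hγ)
    (fun t ht => ?_) (fun t ht => ?_) (by simp [hA.1, hA'.1, ContinuousLinearMap.one_def])
  · simpa [ContinuousLinearMap.comp_assoc] using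
      (hA'.2.1 t ht).clm_comp (hasDerivWithinAt_const t _ (LinearMap.toContinuousLinearMap φ))
  · simpa [← ContinuousLinearMap.comp_assoc, toContinuousLinearMap_comp_adL hφ] using
      (hasDerivWithinAt_const t _ (LinearMap.toContinuousLinearMap φ)).clm_comp (hA.2.1 t ht)

end Naturality

theorem transport_naturality_general {g h : Type*}
    [NormedAddCommGroup g] [NormedSpace ℝ g] [FiniteDimensional ℝ g]
    [NormedAddCommGroup h] [NormedSpace ℝ h] [FiniteDimensional ℝ h]
    (B : g →ₗ[ℝ] g →ₗ[ℝ] g)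
    (B' : h →ₗ[ℝ] h →ₗ[ℝ] h)
    (φ : g →ₗ[ℝ] h) (hφ : ∀ x y : g, φ (B x y) = B' (φ x) (φ y)) :
    (∀ γ : ℝ → g, ContinuousOn γ (Set.Icc 0 1) → ∀ t ∈ Set.Icc (0:ℝ) 1,
      (transport B' (fun s => φ (γ s)) t).comp (LinearMap.toContinuousLinearMap φ)
        = (LinearMap.toContinuousLinearMap φ).comp (transport B γ t)) ∧
    (∀ γ δ : ℝ → g, ContinuousOn γ (Set.Icc 0 1) → ContinuousOn δ (Set.Icc 0 1) →
      ∀ t ∈ Set.Icc (0:ℝ) 1,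
        φ (γ t + transport B γ t (δ t))
          = φ (γ t) + transport B' (fun s => φ (γ s)) t (φ (δ t))) := by
  have naturality (γ : ℝ → g) (hγ : ContinuousOn γ (Icc 0 1)) :=
    (isTransport_transport (B := B) hγ).comp_eqOn_comp hφ hγ
      (isTransport_transport (φ.continuous_of_finiteDimensional.comp_continuousOn hγ))
  refine ⟨naturality, fun γ δ hγ _ t ht => ?_⟩
  simpa using congr($(naturality γ hγ ht) (δ t)).symm

/-- If `φ : g → h` is a homomorphism of finite-dimensional real Lie algebras,
then `A_{φ∘γ}(t) ∘ φ = φ ∘ A_γ(t)` for every continuous path `γ` and `t ∈ [0,1]`;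
consequently `γ ↦ φ∘γ` is a homomorphism of path groups:
`φ∘(γ·δ) = (φ∘γ)·(φ∘δ)`. -/
theorem transport_naturality {g h : Type*}
    [NormedAddCommGroup g] [NormedSpace ℝ g] [FiniteDimensional ℝ g]
    [NormedAddCommGroup h] [NormedSpace ℝ h] [FiniteDimensional ℝ h]
    (B : g →ₗ[ℝ] g →ₗ[ℝ] g) (hB : IsLieBracket B)
    (B' : h →ₗ[ℝ] h →ₗ[ℝ] h) (hB' : IsLieBracket B')
    (φ : g →ₗ[ℝ] h) (hφ : ∀ x y : g, φ (B x y) = B' (φ x) (φ y)) :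
    (∀ γ : ℝ → g, ContinuousOn γ (Set.Icc 0 1) → ∀ t ∈ Set.Icc (0:ℝ) 1,
      (transport B' (fun s => φ (γ s)) t).comp (LinearMap.toContinuousLinearMap φ)
        = (LinearMap.toContinuousLinearMap φ).comp (transport B γ t)) ∧
    (∀ γ δ : ℝ → g, ContinuousOn γ (Set.Icc 0 1) → ContinuousOn δ (Set.Icc 0 1) →
      ∀ t ∈ Set.Icc (0:ℝ) 1,
        φ (γ t + transport B γ t (δ t))
          = φ (γ t) + transport B' (fun s => φ (γ s)) t (φ (δ t))) :=
  transport_naturality_general B B' φ hφ
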